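/- arXiv:2405.06518 — 3 statements merged into one kernel-verified Lean document; each statement's English description precedes it below -/
import Mathlib

section
/- Let M' > 0 and let a ∈ (0, πM']. Let ω : ℝ² → ℝ be measurable with |ω(y)| ≤ M' for almost every y and ∫_{ℝ²} |ω(y)| dy ≤ a. Then for every x ∈ ℝ², ∫_{|y−x|<1} log(1/|x−y|) |ω(y)| dy ≤ (a/2)(log(πM'/a) + 1). -/
open MeasureTheory Real
open scoped RealInnerProductSpace

/-- The plane `ℝ²` with the Euclidean norm. -/
abbrev E2 := EuclideanSpace ℝ (Fin 2)

open Classical in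
/-- The two-dimensional Biot–Savart kernel
`K(x) = (1/(2π)) (−x₂, x₁)/|x|²`, with `K(0) = 0`. -/
noncomputable def K (x : E2) : E2 :=
  if x = 0 then 0
  else (2 * Real.pi * ‖x‖ ^ 2)⁻¹ • (WithLp.equiv 2 (Fin 2 → ℝ)).symm ![-(x 1), x 0]

/-! For every `r > 0`, `log (1 / s) ≤ log⁺ (1 / r) + log⁺ (r / s)`, as `log⁺` is
subadditive on products. Integrated against `|ω| ≤ M'` over the unit disk, the first term
costs at most `log⁺ (1 / r) * a` and the second at most
`M' * ∫ log⁺ (r / ‖y - x‖) dy = M' * π r² / 2`: by the layer cake formula, since the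
superlevel set `{log⁺ (r / ‖y - x‖) > t}` is the ball of radius `r e⁻ᵗ`, in dimension `n`
this integral is `|B(x, r)| / n`. Taking `π M' r² = a` gives the bound. -/

open Measure Metric Module Set

theorem setOf_lt_posLog_div_norm_sub {E : Type*} [NormedAddCommGroup E] {r t : ℝ} (hr : 0 < r)
    (ht : 0 < t) (x : E) :
    {y : E | t < log⁺ (r / ‖y - x‖)} = ball x (exp (-t) * r) \ {x} := by
  ext y
  rcases eq_or_ne y x with rfl | hyx
  · simp [ht.not_gt]
  have hs : 0 < ‖y - x‖ := norm_pos_iff.mpr (sub_ne_zero.mpr hyx)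
  simp only [mem_ofPred_eq, mem_sdiff, mem_ball, dist_eq_norm, mem_singleton_iff, hyx,
    not_false_eq_true, and_true, posLog_apply, lt_max_iff, ht.not_gt, false_or]
  rw [lt_log_iff_exp_lt (div_pos hr hs), lt_div_iff₀ hs, exp_neg, inv_mul_eq_div,
    lt_div_iff₀ (exp_pos t), mul_comm]

theorem log_one_div_le_posLog_add_posLog {r : ℝ} (hr : r ≠ 0) (s : ℝ) :
    log (1 / s) ≤ log⁺ (1 / r) + log⁺ (r / s) :=
  calc log (1 / s) ≤ log⁺ (1 / s) := le_max_right _ _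
    _ = log⁺ (1 / r * (r / s)) := by rw [← mul_div_assoc, one_div_mul_cancel hr]
    _ ≤ log⁺ (1 / r) + log⁺ (r / s) := posLog_mul

theorem log_one_div_norm_sub_nonneg_of_mem_ball {E : Type*} [SeminormedAddCommGroup E] {x y : E}
    (hy : y ∈ ball x 1) :
    0 ≤ log (1 / ‖x - y‖) := by
  rw [one_div, log_inv, neg_nonneg]
  exact log_nonpos (norm_nonneg _) (by rw [← dist_eq_norm, dist_comm]; exact (mem_ball.mp hy).le)

section
variable {E : Type*} [NormedAddCommGroup E] [NormedSpace ℝ E] [FiniteDimensional ℝ E]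
  [MeasurableSpace E] [BorelSpace E] (μ : Measure E) [μ.IsAddHaarMeasure] [Nontrivial E]

theorem lintegral_posLog_div_norm_sub {r : ℝ} (hr : 0 < r) (x : E) :
    ∫⁻ y, ENNReal.ofReal (log⁺ (r / ‖y - x‖)) ∂μ = μ (ball x r) / finrank ℝ E := by
  have hmeas : Measurable fun y : E ↦ log⁺ (r / ‖y - x‖) := by fun_prop
  rw [lintegral_eq_lintegral_meas_lt μ (.of_forall fun _ ↦ posLog_nonneg) hmeas.aemeasurable]
  have hlevel : ∀ t ∈ Ioi (0 : ℝ), μ {y | t < log⁺ (r / ‖y - x‖)} =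
      ENNReal.ofReal (exp (-finrank ℝ E * t)) * μ (ball x r) := by
    intro t ht
    rw [setOf_lt_posLog_div_norm_sub hr ht, measure_sdiff_null (measure_singleton x),
      addHaar_ball_mul_of_pos μ x (exp_pos _), ← addHaar_ball_center μ x r, ← exp_nat_mul]
    ring_nf
  have hn : (0 : ℝ) < finrank ℝ E := by exact_mod_cast finrank_pos
  rw [setLIntegral_congr_fun measurableSet_Ioi hlevel, lintegral_mul_const _ (by fun_prop),
    ← ofReal_integral_eq_lintegral_ofReal, integral_exp_mul_Ioi (by linarith)]
  · rw [mul_zero, exp_zero, neg_div_neg_eq, one_div, ENNReal.ofReal_inv_of_pos hn,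
      ENNReal.ofReal_natCast, ENNReal.div_eq_inv_mul]
  · exact exp_neg_integrableOn_Ioi 0 hn
  · exact .of_forall fun t ↦ (exp_pos _).le

theorem integrable_posLog_div_norm_sub {r : ℝ} (hr : 0 < r) (x : E) :
    Integrable (fun y ↦ log⁺ (r / ‖y - x‖)) μ := by
  refine ⟨Measurable.aestronglyMeasurable (by fun_prop), ?_⟩
  rw [hasFiniteIntegral_iff_ofReal (.of_forall fun _ ↦ posLog_nonneg),
    lintegral_posLog_div_norm_sub μ hr]
  exact ENNReal.div_lt_top measure_ball_lt_top.ne (by exact_mod_cast finrank_pos.ne')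

theorem integral_posLog_div_norm_sub {r : ℝ} (hr : 0 < r) (x : E) :
    ∫ y, log⁺ (r / ‖y - x‖) ∂μ = μ.real (ball x r) / finrank ℝ E := by
  rw [integral_eq_lintegral_of_nonneg_ae (.of_forall fun _ ↦ posLog_nonneg)
      (Measurable.aestronglyMeasurable (by fun_prop)),
    lintegral_posLog_div_norm_sub μ hr, ENNReal.toReal_div, ENNReal.toReal_natCast,
    measureReal_def]

theorem setIntegral_ball_log_one_div_norm_sub_mul_abs_le {f : E → ℝ} (hf : Integrable f μ)
    {M : ℝ} (hfM : ∀ᵐ y ∂μ, |f y| ≤ M) {r : ℝ} (hr : 0 < r) (x : E) :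
    ∫ y in ball x 1, log (1 / ‖x - y‖) * |f y| ∂μ ≤
      log⁺ (1 / r) * ∫ y, |f y| ∂μ + M * (μ.real (ball x r) / finrank ℝ E) := by
  have hM : 0 ≤ M := by
    obtain ⟨y, hy⟩ := hfM.exists
    exact (abs_nonneg _).trans hy
  set g : E → ℝ := fun y ↦ log⁺ (1 / r) * |f y| + M * log⁺ (r / ‖y - x‖)
  have hg : Integrable g μ :=
    (hf.abs.const_mul _).add ((integrable_posLog_div_norm_sub μ hr x).const_mul M)
  have hle_g : ∀ᵐ y ∂μ, log (1 / ‖x - y‖) * |f y| ≤ g y := by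
    filter_upwards [hfM] with y hy
    have hlog : log (1 / ‖x - y‖) ≤ log⁺ (1 / r) + log⁺ (r / ‖y - x‖) := by
      simpa only [norm_sub_rev] using log_one_div_le_posLog_add_posLog hr.ne' ‖x - y‖
    calc log (1 / ‖x - y‖) * |f y| ≤ (log⁺ (1 / r) + log⁺ (r / ‖y - x‖)) * |f y| :=
          mul_le_mul_of_nonneg_right hlog (abs_nonneg _)
      _ ≤ g y := by
          have := mul_le_mul_of_nonneg_left hy (posLog_nonneg (x := r / ‖y - x‖))
          simp only [g]
          linarith
  have hg_nonneg : 0 ≤ g := fun y ↦ by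
    simp only [g, Pi.zero_apply]
    exact add_nonneg (mul_nonneg posLog_nonneg (abs_nonneg _)) (mul_nonneg hM posLog_nonneg)
  calc ∫ y in ball x 1, log (1 / ‖x - y‖) * |f y| ∂μ ≤ ∫ y in ball x 1, g y ∂μ := by
        refine integral_mono_of_nonneg ?_ hg.restrict (ae_restrict_of_ae hle_g)
        filter_upwards [ae_restrict_mem measurableSet_ball] with y hy
        exact mul_nonneg (log_one_div_norm_sub_nonneg_of_mem_ball hy) (abs_nonneg _)
    _ ≤ ∫ y, g y ∂μ := setIntegral_le_integral hg (.of_forall hg_nonneg)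
    _ = _ := by
        rw [integral_add (hf.abs.const_mul _)
            ((integrable_posLog_div_norm_sub μ hr x).const_mul M), integral_const_mul,
          integral_const_mul, integral_posLog_div_norm_sub μ hr]
end

theorem stmt2_general (M' a : ℝ) (hM : 0 < M') (ha : 0 < a) (haM : a ≤ Real.pi * M')
    (ω : E2 → ℝ)
    (hbdd : ∀ᵐ y, |ω y| ≤ M') (hint : Integrable ω)
    (hmass : (∫ y, |ω y|) ≤ a) :
    ∀ x : E2, (∫ y in {y : E2 | ‖y - x‖ < 1}, Real.log (1 / ‖x - y‖) * |ω y|) ≤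
      a / 2 * (Real.log (Real.pi * M' / a) + 1) := by
  intro x
  have hπM : 0 < π * M' := mul_pos pi_pos hM
  set r := √(a / (π * M'))
  have hr : 0 < r := sqrt_pos.mpr (div_pos ha hπM)
  have hr_sq : r ^ 2 = a / (π * M') := sq_sqrt (div_pos ha hπM).le
  have hposLog : log⁺ (1 / r) = log (π * M' / a) / 2 := by
    have h1 : 1 ≤ √(π * M' / a) := one_le_sqrt.mpr ((one_le_div ha).mpr haM)
    rw [one_div, ← sqrt_inv, inv_div, posLog_eq_log (by rwa [abs_of_nonneg (sqrt_nonneg _)]),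
      log_sqrt (div_pos hπM ha).le]
  have hball : volume.real (ball x r) = π * r ^ 2 := by
    rw [measureReal_def, EuclideanSpace.volume_ball_fin_two, ENNReal.toReal_mul,
      ENNReal.toReal_pow, ENNReal.toReal_ofReal hr.le, ENNReal.toReal_ofReal pi_pos.le, mul_comm]
  have hdisk : {y : E2 | ‖y - x‖ < 1} = ball x 1 := by
    ext y
    simp [dist_eq_norm]
  rw [hdisk]
  calc _ ≤ log⁺ (1 / r) * (∫ y, |ω y|) + M' * (volume.real (ball x r) / finrank ℝ E2) :=
        setIntegral_ball_log_one_div_norm_sub_mul_abs_le volume hint hbdd hr x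
    _ ≤ log⁺ (1 / r) * a + M' * (π * r ^ 2 / 2) := by
        rw [hball, finrank_euclideanSpace_fin, Nat.cast_ofNat]
        gcongr
        exact posLog_nonneg
    _ = a / 2 * (log (π * M' / a) + 1) := by
        rw [hposLog, hr_sq]
        field_simp

/-- Rearrangement bound for the logarithmic singularity. -/
theorem stmt2 (M' a : ℝ) (hM : 0 < M') (ha : 0 < a) (haM : a ≤ Real.pi * M')
    (ω : E2 → ℝ) (hmeas : Measurable ω)
    (hbdd : ∀ᵐ y, |ω y| ≤ M') (hint : Integrable ω)
    (hmass : (∫ y, |ω y|) ≤ a) :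
    ∀ x : E2, (∫ y in {y : E2 | ‖y - x‖ < 1}, Real.log (1 / ‖x - y‖) * |ω y|) ≤
      a / 2 * (Real.log (Real.pi * M' / a) + 1) :=
  stmt2_general M' a hM ha haM ω hbdd hint hmass
end

section
/- There exists a universal constant C > 0 with the following property. Let B ∈ ℝ², R > 0, ρ > 0 with R ≥ 4ρ, and let ω : ℝ² → [0, ∞) be measurable with support contained in the closed ball of center B and radius R, finite total mass, ∫_{ℝ²} (y − B) ω(y) dy = 0, and moment of inertia I = ∫_{ℝ²} |y − B|² ω(y) dy < ∞. Then for every x ∈ ℝ² with R − ρ/2 ≤ |x − B| ≤ R one has | ((x−B)/|x−B|) · ∫_{|y−B| ≤ R−ρ} K(x−y) ω(y) dy | ≤ C I / ρ³. -/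
open MeasureTheory Real
open scoped RealInnerProductSpace

/-!
Write `u` for the outward unit vector at `x` and `J` for the rotation by `π/2`. Since
`⟪u, J (x - B)⟫ = 0`, the radial velocity is `-∫ ω(y) ⟪u, J (y - B)⟫ / (2π|x - y|²)` over the
inner disc `S`, and the weight `f(y) = ω(y) ⟪u, J (y - B)⟫` has mean zero because `B` is the
center of vorticity. So the kernel may be replaced by its deviation from the constant
`(2π|x - B|²)⁻¹` on `S`, at the price of the integral of `f` over the complement of `S`. On `S`
that deviation is at most `|y - B| / ρ³`, while off `S` the constant itself is at most
`|y - B| / ρ³` because `|y - B| > R - ρ ≥ ρ`. Since `|f(y)| ≤ ω(y) |y - B|`, both pieces are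
bounded by `∫ |y - B|² ω(y) dy / ρ³`.
-/

section MeanZero

variable {α : Type*} [MeasurableSpace α] {μ : Measure α}

theorem abs_setIntegral_mul_le_of_integral_eq_zero {s : Set α} (hs : MeasurableSet s)
    {f k a b : α → ℝ} {c : ℝ} (hf : Integrable f μ) (hf0 : ∫ y, f y ∂μ = 0)
    (hk : AEStronglyMeasurable k (μ.restrict s)) (hab : Integrable (fun y => a y * b y) μ)
    (hfa : ∀ y, |f y| ≤ a y) (hk_near : ∀ y ∈ s, |k y - c| ≤ b y)
    (hc_far : ∀ y ∈ sᶜ, |c| ≤ b y) :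
    |∫ y in s, f y * k y ∂μ| ≤ ∫ y, a y * b y ∂μ := by
  have h_near : ∀ y ∈ s, |f y * (k y - c)| ≤ a y * b y := fun y hy => by
    rw [abs_mul]
    exact mul_le_mul (hfa y) (hk_near y hy) (abs_nonneg _) ((abs_nonneg _).trans (hfa y))
  have h_far : ∀ y ∈ sᶜ, |c * f y| ≤ a y * b y := fun y hy => by
    rw [abs_mul, mul_comm (a y)]
    exact mul_le_mul (hc_far y hy) (hfa y) (abs_nonneg _) ((abs_nonneg _).trans (hc_far y hy))
  have h_near_int : IntegrableOn (fun y => f y * (k y - c)) s μ :=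
    hab.integrableOn.mono'
      (hf.aestronglyMeasurable.restrict.mul (hk.sub aestronglyMeasurable_const))
      (ae_restrict_of_forall_mem hs h_near)
  have h_split : ∫ y in s, f y * k y ∂μ =
      (∫ y in s, f y * (k y - c) ∂μ) - ∫ y in sᶜ, c * f y ∂μ := by
    have h_cancel : (∫ y in s, f y ∂μ) + ∫ y in sᶜ, f y ∂μ = 0 := by
      rw [integral_add_compl hs hf, hf0]
    have h_pt : ∀ y, f y * k y = f y * (k y - c) + c * f y := fun y => by ring
    simp only [h_pt, integral_add h_near_int (hf.integrableOn.const_mul c), integral_const_mul]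
    linear_combination c * h_cancel
  have h_bound : ∀ {t : Set α} {F : α → ℝ}, MeasurableSet t → (∀ y ∈ t, |F y| ≤ a y * b y) →
      |∫ y in t, F y ∂μ| ≤ ∫ y in t, a y * b y ∂μ := fun {t F} ht hF =>
    norm_integral_le_of_norm_le (f := F) hab.integrableOn (ae_restrict_of_forall_mem ht hF)
  calc |∫ y in s, f y * k y ∂μ|
      ≤ |∫ y in s, f y * (k y - c) ∂μ| + |∫ y in sᶜ, c * f y ∂μ| := by
        rw [h_split]; exact abs_sub _ _
    _ ≤ (∫ y in s, a y * b y ∂μ) + ∫ y in sᶜ, a y * b y ∂μ :=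
        add_le_add (h_bound hs h_near) (h_bound hs.compl h_far)
    _ = ∫ y, a y * b y ∂μ := integral_add_compl hs hab

end MeanZero

section Moments

variable {α E F : Type*} [MeasurableSpace α] {μ : Measure α}
  [NormedAddCommGroup E] [NormedSpace ℝ E]
  [NormedAddCommGroup F] [InnerProductSpace ℝ F]

theorem MeasureTheory.Integrable.smul_of_integrable_norm_sq_mul {ω : α → ℝ} {v : α → E}
    (hω : Integrable ω μ) (hv : AEStronglyMeasurable v μ)
    (hω2 : Integrable (fun y => ‖v y‖ ^ 2 * ω y) μ) :
    Integrable (fun y => ω y • v y) μ := by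
  refine (hω.norm.add hω2.norm).mono' (hω.aestronglyMeasurable.smul hv) ?_
  filter_upwards with y
  have h : ‖v y‖ ≤ 1 + ‖v y‖ ^ 2 := by nlinarith [sq_nonneg (‖v y‖ - 1)]
  simp only [Pi.add_apply, norm_smul, norm_mul, norm_pow, norm_norm]
  nlinarith [norm_nonneg (ω y)]

theorem MeasureTheory.Integrable.mul_inner_clm {ω : α → ℝ} {v : α → E}
    (hv : Integrable (fun y => ω y • v y) μ) (L : E →L[ℝ] F) (u : F) :
    Integrable (fun y => ω y * ⟪u, L (v y)⟫) μ := by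
  simpa only [map_smul, real_inner_smul_right] using (L.integrable_comp hv).const_inner (𝕜 := ℝ) u

theorem integral_mul_inner_clm_eq_zero [CompleteSpace E] [CompleteSpace F] {ω : α → ℝ}
    {v : α → E} (hv : Integrable (fun y => ω y • v y) μ) (h0 : ∫ y, ω y • v y ∂μ = 0)
    (L : E →L[ℝ] F) (u : F) : ∫ y, ω y * ⟪u, L (v y)⟫ ∂μ = 0 := by
  simp_rw [← real_inner_smul_right, ← map_smul]
  rw [integral_inner (L.integrable_comp hv), L.integral_comp_comm hv, h0, map_zero,
    inner_zero_right]

end Moments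

noncomputable def rot90 : E2 →L[ℝ] E2 :=
  LinearMap.toContinuousLinearMap
    { toFun := fun z => (WithLp.equiv 2 (Fin 2 → ℝ)).symm ![-(z 1), z 0]
      map_add' := fun a b => by ext i; fin_cases i <;> simp; ring
      map_smul' := fun c a => by ext i; fin_cases i <;> simp }

theorem norm_rot90 (z : E2) : ‖rot90 z‖ = ‖z‖ := by
  simp [rot90, EuclideanSpace.norm_eq, Fin.sum_univ_two, add_comm]

theorem inner_self_rot90 (z : E2) : ⟪z, rot90 z⟫ = 0 := by
  simp [rot90, PiLp.inner_apply, Fin.sum_univ_two]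
  ring

theorem abs_mul_inner_rot90_le {u : E2} (hu : ‖u‖ ≤ 1) {w : ℝ} (hw : 0 ≤ w) (z : E2) :
    |w * ⟪u, rot90 z⟫| ≤ w * ‖z‖ := by
  rw [abs_mul, abs_of_nonneg hw]
  refine mul_le_mul_of_nonneg_left ((abs_real_inner_le_norm _ _).trans ?_) hw
  rw [norm_rot90]
  exact mul_le_of_le_one_left (norm_nonneg z) hu

-- `(2π · 0)⁻¹ = 0`, so no case distinction at `z = 0` is needed.
theorem K_eq_smul_rot90 (z : E2) : K z = (2 * π * ‖z‖ ^ 2)⁻¹ • rot90 z := by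
  by_cases hz : z = 0
  · simp [K, hz]
  · simp only [K, hz, if_false]
    rfl

theorem norm_K (z : E2) : ‖K z‖ = (2 * π * ‖z‖)⁻¹ := by
  rw [K_eq_smul_rot90, norm_smul, norm_rot90, Real.norm_eq_abs, abs_of_nonneg (by positivity)]
  rcases eq_or_ne ‖z‖ 0 with hz | hz
  · simp [hz]
  · field_simp

@[fun_prop]
theorem measurable_K : Measurable K := by
  rw [funext K_eq_smul_rot90]
  fun_prop

theorem inner_smul_K_sub (a : ℝ) (B x y : E2) :
    ⟪a • (x - B), K (x - y)⟫ = -(⟪a • (x - B), rot90 (y - B)⟫ * (2 * π * ‖x - y‖ ^ 2)⁻¹) := by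
  have h : x - y = (x - B) - (y - B) := by abel
  rw [K_eq_smul_rot90, real_inner_smul_right, h, map_sub, inner_sub_right, real_inner_smul_left,
    inner_self_rot90]
  ring

theorem integrableOn_smul_K_sub {μ : Measure E2} {ω : E2 → ℝ} (hω : Integrable ω μ) (x : E2)
    {S : Set E2} (hS : MeasurableSet S) {δ : ℝ} (hδ : 0 < δ) (hfar : ∀ y ∈ S, δ ≤ ‖x - y‖) :
    IntegrableOn (fun y => ω y • K (x - y)) S μ := by
  have hK : Measurable fun y => K (x - y) := by fun_prop
  refine (hω.norm.const_mul (2 * π * δ)⁻¹).integrableOn.mono'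
    (hω.aestronglyMeasurable.smul hK.aestronglyMeasurable).restrict
    (ae_restrict_of_forall_mem hS fun y hy => ?_)
  rw [norm_smul, norm_K, mul_comm]
  gcongr
  exact hfar y hy

theorem inner_integral_smul_K_sub {μ : Measure E2} {ω : E2 → ℝ} (a : ℝ) (B x : E2)
    (hint : Integrable (fun y => ω y • K (x - y)) μ) :
    ⟪a • (x - B), ∫ y, ω y • K (x - y) ∂μ⟫ =
      -∫ y, ω y * ⟪a • (x - B), rot90 (y - B)⟫ * (2 * π * ‖x - y‖ ^ 2)⁻¹ ∂μ := by
  rw [← integral_inner hint, ← integral_neg]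
  congr 1 with y
  rw [real_inner_smul_right, inner_smul_K_sub]
  ring

theorem inv_two_pi_sq_le_div {ρ d r : ℝ} (hρ : 0 < ρ) (hd : ρ ≤ d) (hr : ρ ≤ r) :
    (2 * π * d ^ 2)⁻¹ ≤ r / ρ ^ 3 := by
  have hπ : 1 ≤ π := by linarith [pi_gt_three]
  calc (2 * π * d ^ 2)⁻¹ ≤ (ρ ^ 2)⁻¹ := by
        gcongr
        nlinarith [pow_le_pow_left₀ hρ.le hd 2]
    _ = ρ / ρ ^ 3 := by field_simp
    _ ≤ r / ρ ^ 3 := by gcongr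

theorem abs_inv_two_pi_sq_sub_le {ρ s d : ℝ} (hρ : 0 < ρ) (hs : ρ / 2 ≤ s) (hd : ρ ≤ d) :
    |(2 * π * s ^ 2)⁻¹ - (2 * π * d ^ 2)⁻¹| ≤ |s - d| / ρ ^ 3 := by
  have hs0 : 0 < s := by linarith
  have hd0 : 0 < d := by linarith
  have h_eq : (2 * π * s ^ 2)⁻¹ - (2 * π * d ^ 2)⁻¹ =
      (d - s) * (d + s) / (2 * π * s ^ 2 * d ^ 2) := by
    field_simp
    ring
  have h_key : (d + s) * ρ ^ 3 ≤ 2 * π * s ^ 2 * d ^ 2 := by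
    have h1 : d * ρ ^ 3 ≤ 4 * s ^ 2 * d ^ 2 := by
      have : ρ ^ 2 ≤ (2 * s) ^ 2 := pow_le_pow_left₀ hρ.le (by linarith) 2
      calc d * ρ ^ 3 = d * ρ * ρ ^ 2 := by ring
        _ ≤ d * d * (2 * s) ^ 2 := by gcongr
        _ = 4 * s ^ 2 * d ^ 2 := by ring
    have h2 : s * ρ ^ 3 ≤ 2 * s ^ 2 * d ^ 2 := by
      have : ρ ^ 2 ≤ d ^ 2 := pow_le_pow_left₀ hρ.le hd 2
      calc s * ρ ^ 3 = s * ρ * ρ ^ 2 := by ring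
        _ ≤ s * (2 * s) * d ^ 2 := by gcongr; linarith
        _ = 2 * s ^ 2 * d ^ 2 := by ring
    nlinarith [pi_gt_three, mul_pos (pow_pos hs0 2) (pow_pos hd0 2)]
  rw [h_eq, abs_div, abs_mul, abs_of_pos (by positivity : 0 < d + s), abs_sub_comm d,
    abs_of_pos (by positivity : 0 < 2 * π * s ^ 2 * d ^ 2),
    div_le_div_iff₀ (by positivity) (by positivity), mul_assoc]
  exact mul_le_mul_of_nonneg_left h_key (abs_nonneg _)

theorem abs_inv_two_pi_norm_sq_sub_le {ρ : ℝ} (hρ : 0 < ρ) {B x y : E2}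
    (hy : ρ / 2 ≤ ‖x - y‖) (hx : ρ ≤ ‖x - B‖) :
    |(2 * π * ‖x - y‖ ^ 2)⁻¹ - (2 * π * ‖x - B‖ ^ 2)⁻¹| ≤ ‖y - B‖ / ρ ^ 3 := by
  refine (abs_inv_two_pi_sq_sub_le hρ hy hx).trans ?_
  gcongr
  have := abs_norm_sub_norm_le (x - y) (x - B)
  rwa [sub_sub_sub_cancel_left, norm_sub_rev B y] at this

/-- Estimate on the radial component of the self-induced velocity of a fluid
particle near the outer boundary of the vortex blob. -/
theorem stmt10 :
    ∃ C > (0:ℝ), ∀ (B : E2) (R ρ : ℝ) (ω : E2 → ℝ),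
      0 < ρ → 4 * ρ ≤ R → (∀ y, 0 ≤ ω y) → Measurable ω →
      Function.support ω ⊆ Metric.closedBall B R → Integrable ω →
      Integrable (fun y => ‖y - B‖ ^ 2 * ω y) →
      (∫ y, ω y • (y - B)) = (0 : E2) →
      ∀ x : E2, R - ρ / 2 ≤ ‖x - B‖ → ‖x - B‖ ≤ R →
        |⟪(‖x - B‖)⁻¹ • (x - B), ∫ y in {y : E2 | ‖y - B‖ ≤ R - ρ}, ω y • K (x - y)⟫| ≤
          C * (∫ y, ‖y - B‖ ^ 2 * ω y) / ρ ^ 3 := by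
  refine ⟨1, one_pos, fun B R ρ ω hρ hRρ hω _ _ hint hint2 hmean x hx _ => ?_⟩
  set S := {y : E2 | ‖y - B‖ ≤ R - ρ}
  have hS : MeasurableSet S := measurableSet_le (by fun_prop) measurable_const
  have hfar : ∀ y ∈ S, ρ / 2 ≤ ‖x - y‖ := fun y (hy : ‖y - B‖ ≤ R - ρ) => by
    have := norm_sub_norm_le (x - B) (y - B)
    rw [sub_sub_sub_cancel_right] at this
    linarith
  have hd : ρ ≤ ‖x - B‖ := by linarith
  have hu : ‖‖x - B‖⁻¹ • (x - B)‖ = 1 := norm_smul_inv_norm (norm_pos_iff.mp (by linarith))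
  have hvec : Integrable (fun y => ω y • (y - B)) :=
    hint.smul_of_integrable_norm_sq_mul (by fun_prop) hint2
  rw [inner_integral_smul_K_sub _ _ _ (integrableOn_smul_K_sub hint x hS (by positivity) hfar),
    abs_neg, one_mul]
  calc _ ≤ ∫ y, ω y * ‖y - B‖ * (‖y - B‖ / ρ ^ 3) :=
        abs_setIntegral_mul_le_of_integral_eq_zero hS (c := (2 * π * ‖x - B‖ ^ 2)⁻¹)
          (hvec.mul_inner_clm rot90 _) (integral_mul_inner_clm_eq_zero hvec hmean rot90 _)
          (by fun_prop) ((hint2.div_const (ρ ^ 3)).congr (ae_of_all _ fun y => by ring))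
          (fun y => abs_mul_inner_rot90_le hu.le (hω y) _)
          (fun y hy => abs_inv_two_pi_norm_sq_sub_le hρ (hfar y hy) hd)
          (fun y (hy : ¬‖y - B‖ ≤ R - ρ) => by
            rw [abs_of_nonneg (by positivity)]
            exact inv_two_pi_sq_le_div hρ hd (by linarith))
    _ = _ := by rw [← integral_div]; congr 1 with y; ring
end

section
/- Let B ∈ ℝ², let R ≥ 2h > 0, C_W > 1 and C_F > 0. Let W : ℝ² → ℝ be continuously differentiable with ∇W(z) = 0 whenever |z| ≤ R or |z| ≥ R + h, and |∇W(z)| ≤ C_W/h for all z. Let F : ℝ² → ℝ² satisfy |F(x)| ≤ C_F and |F(x) − F(y)| ≤ C_F |x − y| for all x, y ∈ ℝ². Let ω : ℝ² → [0, ∞) be bounded, measurable, compactly supported, with total mass a = ∫_{ℝ²} ω(y) dy, moment of inertia I = ∫_{ℝ²} |y − B|² ω(y) dy, and tail mass m(R) = ∫_{|y−B| > R} ω(y) dy. Then |∫_{ℝ²}∫_{ℝ²} ∇W(x−B) · (F(x) − F(y)) ω(y) ω(x) dy dx| ≤ C_W C_F a (1 + 2R/h) m(R) + 2 C_W C_F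 (I/(R²h)) m(R). -/
open MeasureTheory Real
open scoped RealInnerProductSpace

/-!
The gradient `∇W(x - B)` vanishes unless `x` lies in the shell `R < |x - B| < R + h`, where it
is at most `C_W / h`. For such `x`, `|F x - F y| ≤ C_F (2R + h)` when `|y - B| ≤ R` (Lipschitz
bound), and `|F x - F y| ≤ 2 C_F ≤ 2 C_F |y - B|² / R²` otherwise (sup bound). So the integrand
is dominated by the product
`1_{|x - B| > R} ω x · (C_W C_F (1 + 2R/h) + 2 C_W C_F |y - B|² / (R² h)) ω y`,
whose double integral is the right-hand side.
-/

section
open Set Function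

theorem HasCompactSupport.integrable_of_bound {X E : Type*} [TopologicalSpace X]
    [MeasurableSpace X] [NormedAddCommGroup E] {μ : Measure X} [IsFiniteMeasureOnCompacts μ]
    {f : X → E} (hs : HasCompactSupport f) (hf : AEStronglyMeasurable f μ) {M : ℝ}
    (hM : ∀ x, ‖f x‖ ≤ M) : Integrable f μ :=
  (integrableOn_iff_integrable_of_support_subset (subset_tsupport f)).1 <|
    Measure.integrableOn_of_bounded hs.isCompact.measure_lt_top.ne hf (ae_of_all _ hM)

theorem MeasureTheory.Integrable.continuous_mul_of_hasCompactSupport {X R : Type*}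
    [TopologicalSpace X] [T2Space X] [MeasurableSpace X] [OpensMeasurableSpace X] [NormedRing R]
    [SecondCountableTopologyEither X R] {μ : Measure X} {f g : X → R} (hg : Continuous g)
    (hf : Integrable f μ) (hs : HasCompactSupport f) : Integrable (fun x ↦ g x * f x) μ := by
  refine (integrableOn_iff_integrable_of_support_subset ?_).1 <|
    hf.integrableOn.continuousOn_mul hg.continuousOn hs.isCompact
  exact (support_mul_subset_right g f).trans (subset_tsupport f)

theorem measurable_gradient {F : Type*} [NormedAddCommGroup F] [InnerProductSpace ℝ F]
    [CompleteSpace F] [MeasurableSpace F] [BorelSpace F] (f : F → ℝ) :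
    Measurable (gradient f) :=
  (InnerProductSpace.toDual ℝ F).symm.continuous.measurable.comp (measurable_fderiv ℝ f)

theorem abs_integral_integral_le_of_abs_le_mul {α β : Type*} [MeasurableSpace α]
    [MeasurableSpace β] {μ : Measure α} {ν : Measure β} [SFinite μ] [SFinite ν]
    {f : α → β → ℝ} {u : α → ℝ} {v : β → ℝ} (hf : AEStronglyMeasurable (uncurry f) (μ.prod ν))
    (hu : Integrable u μ) (hv : Integrable v ν) (hle : ∀ x y, |f x y| ≤ u x * v y) :
    |∫ x, ∫ y, f x y ∂ν ∂μ| ≤ (∫ x, u x ∂μ) * ∫ y, v y ∂ν := by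
  have huv : Integrable (fun p : α × β ↦ u p.1 * v p.2) (μ.prod ν) := hu.mul_prod hv
  have hf_int : Integrable (uncurry f) (μ.prod ν) :=
    huv.mono' hf (ae_of_all _ fun p ↦ hle p.1 p.2)
  rw [integral_integral hf_int, ← integral_prod_mul, ← Real.norm_eq_abs]
  exact (norm_integral_le_integral_norm _).trans <|
    integral_mono hf_int.norm huv fun p ↦ hle p.1 p.2

end

theorem norm_sub_le_of_bound_of_lipschitz {α E : Type*} [SeminormedAddCommGroup α]
    [SeminormedAddCommGroup E] {F : α → E} {C R r : ℝ} (hR : 0 < R)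
    (hF_bd : ∀ x, ‖F x‖ ≤ C) (hF_lip : ∀ x y, ‖F x - F y‖ ≤ C * ‖x - y‖) {x y B : α}
    (hx : ‖x - B‖ ≤ r) : ‖F x - F y‖ ≤ C * (r + R) + 2 * C / R ^ 2 * ‖y - B‖ ^ 2 := by
  have hC : 0 ≤ C := (norm_nonneg _).trans (hF_bd x)
  have hr : 0 ≤ r := (norm_nonneg _).trans hx
  rcases le_or_gt ‖y - B‖ R with hy | hy
  · have hxy : ‖x - y‖ ≤ r + R := by
      calc ‖x - y‖ = ‖(x - B) - (y - B)‖ := by rw [sub_sub_sub_cancel_right]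
        _ ≤ ‖x - B‖ + ‖y - B‖ := norm_sub_le _ _
        _ ≤ r + R := add_le_add hx hy
    calc ‖F x - F y‖ ≤ C * (r + R) := (hF_lip x y).trans (by gcongr)
      _ ≤ _ := le_add_of_nonneg_right (by positivity)
  · have hFxy : ‖F x - F y‖ ≤ 2 * C := by
      linarith [norm_sub_le (F x) (F y), hF_bd x, hF_bd y]
    have h2C : 2 * C ≤ 2 * C / R ^ 2 * ‖y - B‖ ^ 2 := by
      rw [div_mul_eq_mul_div, le_div_iff₀ (by positivity)]
      gcongr
    linarith [mul_nonneg hC (add_nonneg hr hR.le)]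

section Shell

variable {α E : Type*} [SeminormedAddCommGroup α] [NormedAddCommGroup E]
  [InnerProductSpace ℝ E] {G F : α → E} {B : α} {R h C_W C_F : ℝ}

theorem abs_inner_le_of_norm_sub_le (hR : 0 < R) (hh : 0 < h) (hG_bd : ∀ z, ‖G z‖ ≤ C_W / h)
    (hF_bd : ∀ x, ‖F x‖ ≤ C_F) (hF_lip : ∀ x y, ‖F x - F y‖ ≤ C_F * ‖x - y‖) {x : α}
    (hx : ‖x - B‖ ≤ R + h) (y : α) :
    |⟪G (x - B), F x - F y⟫| ≤
      C_W * C_F * (1 + 2 * R / h) + 2 * C_W * C_F / (R ^ 2 * h) * ‖y - B‖ ^ 2 := by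
  calc |⟪G (x - B), F x - F y⟫| ≤ ‖G (x - B)‖ * ‖F x - F y‖ := abs_real_inner_le_norm _ _
    _ ≤ C_W / h * (C_F * (R + h + R) + 2 * C_F / R ^ 2 * ‖y - B‖ ^ 2) :=
      mul_le_mul (hG_bd _) (norm_sub_le_of_bound_of_lipschitz hR hF_bd hF_lip hx)
        (norm_nonneg _) ((norm_nonneg _).trans (hG_bd 0))
    _ = _ := by field_simp; ring

theorem abs_inner_mul_mul_le_indicator_mul (hR : 0 < R) (hh : 0 < h)
    (hG_zero : ∀ z, ‖z‖ ≤ R ∨ R + h ≤ ‖z‖ → G z = 0) (hG_bd : ∀ z, ‖G z‖ ≤ C_W / h)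
    (hF_bd : ∀ x, ‖F x‖ ≤ C_F) (hF_lip : ∀ x y, ‖F x - F y‖ ≤ C_F * ‖x - y‖)
    {ω : α → ℝ} (hω : ∀ y, 0 ≤ ω y) (x y : α) :
    |⟪G (x - B), F x - F y⟫ * ω y * ω x| ≤
      {x | R < ‖x - B‖}.indicator ω x *
        (C_W * C_F * (1 + 2 * R / h) * ω y +
          2 * C_W * C_F / (R ^ 2 * h) * (‖y - B‖ ^ 2 * ω y)) := by
  by_cases hG : G (x - B) = 0
  · have hCW : 0 ≤ C_W := by
      have := (norm_nonneg _).trans (hG_bd 0)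
      rwa [le_div_iff₀ hh, zero_mul] at this
    have hCF : 0 ≤ C_F := (norm_nonneg _).trans (hF_bd 0)
    rw [hG, inner_zero_left, zero_mul, zero_mul, abs_zero]
    have := hω y
    exact mul_nonneg (Set.indicator_nonneg (fun z _ ↦ hω z) x) (by positivity)
  · have hx_gt : R < ‖x - B‖ := not_le.1 fun hle ↦ hG (hG_zero _ (Or.inl hle))
    have hx_lt : ‖x - B‖ < R + h := not_le.1 fun hle ↦ hG (hG_zero _ (Or.inr hle))
    rw [Set.indicator_of_mem (show x ∈ {x | R < ‖x - B‖} from hx_gt), abs_mul, abs_mul,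
      abs_of_nonneg (hω x), abs_of_nonneg (hω y)]
    have hk := abs_inner_le_of_norm_sub_le hR hh hG_bd hF_bd hF_lip hx_lt.le y
    calc |⟪G (x - B), F x - F y⟫| * ω y * ω x
        ≤ (C_W * C_F * (1 + 2 * R / h) + 2 * C_W * C_F / (R ^ 2 * h) * ‖y - B‖ ^ 2) * ω y * ω x :=
          by gcongr <;> exact hω _
      _ = _ := by ring

end Shell

theorem stmt12_general (B : E2) (R h C_W C_F : ℝ) (hh : 0 < h) (hRh : 2 * h ≤ R)
    (W : E2 → ℝ)
    (hgrad_zero : ∀ z : E2, ‖z‖ ≤ R ∨ R + h ≤ ‖z‖ → gradient W z = 0)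
    (hgrad_bd : ∀ z : E2, ‖gradient W z‖ ≤ C_W / h)
    (F : E2 → E2) (hF_bd : ∀ x, ‖F x‖ ≤ C_F)
    (hF_lip : ∀ x y, ‖F x - F y‖ ≤ C_F * ‖x - y‖)
    (ω : E2 → ℝ) (hnn : ∀ y, 0 ≤ ω y) (hmeas : Measurable ω)
    (hbdd : ∃ M, ∀ y, ω y ≤ M) (hsupp : HasCompactSupport ω) :
    |∫ x, ∫ y, ⟪gradient W (x - B), F x - F y⟫ * ω y * ω x| ≤
      C_W * C_F * (∫ y, ω y) * (1 + 2 * R / h) * (∫ y in {y : E2 | R < ‖y - B‖}, ω y) +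
        2 * C_W * C_F * ((∫ y, ‖y - B‖ ^ 2 * ω y) / (R ^ 2 * h)) *
          (∫ y in {y : E2 | R < ‖y - B‖}, ω y) := by
  obtain ⟨M, hM⟩ := hbdd
  have hR : 0 < R := by linarith
  have hω : Integrable ω :=
    hsupp.integrable_of_bound hmeas.aestronglyMeasurable fun y ↦ by
      rw [Real.norm_of_nonneg (hnn y)]; exact hM y
  have hmom : Integrable fun y ↦ ‖y - B‖ ^ 2 * ω y :=
    hω.continuous_mul_of_hasCompactSupport (by fun_prop) hsupp
  have hS : MeasurableSet {x : E2 | R < ‖x - B‖} := measurableSet_lt (by fun_prop) (by fun_prop)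
  have hF : Continuous F :=
    (LipschitzWith.of_dist_le' (K := C_F) (by simpa [dist_eq_norm])).continuous
  have hW : Measurable (gradient W) := measurable_gradient W
  set c₁ := C_W * C_F * (1 + 2 * R / h)
  set c₂ := 2 * C_W * C_F / (R ^ 2 * h)
  have hweight := (hω.const_mul c₁).add (hmom.const_mul c₂)
  calc _ ≤ (∫ x, {x : E2 | R < ‖x - B‖}.indicator ω x) *
        ∫ y, c₁ * ω y + c₂ * (‖y - B‖ ^ 2 * ω y) :=
      abs_integral_integral_le_of_abs_le_mul (Measurable.aestronglyMeasurable (by fun_prop))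
        (hω.indicator hS) hweight
        (abs_inner_mul_mul_le_indicator_mul hR hh hgrad_zero hgrad_bd hF_bd hF_lip hnn)
    _ = _ := by
      rw [integral_indicator hS, integral_add (hω.const_mul c₁) (hmom.const_mul c₂),
        integral_const_mul, integral_const_mul]
      ring

/-- Estimate on the term `H₄`, driven by the bounded Lipschitz external field `F`,
in the evolution of the mollified tail mass of the vorticity. -/
theorem stmt12 (B : E2) (R h C_W C_F : ℝ) (hh : 0 < h) (hRh : 2 * h ≤ R)
    (hCW : 1 < C_W) (hCF : 0 < C_F)
    (W : E2 → ℝ) (hW1 : ContDiff ℝ 1 W)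
    (hgrad_zero : ∀ z : E2, ‖z‖ ≤ R ∨ R + h ≤ ‖z‖ → gradient W z = 0)
    (hgrad_bd : ∀ z : E2, ‖gradient W z‖ ≤ C_W / h)
    (F : E2 → E2) (hF_bd : ∀ x, ‖F x‖ ≤ C_F)
    (hF_lip : ∀ x y, ‖F x - F y‖ ≤ C_F * ‖x - y‖)
    (ω : E2 → ℝ) (hnn : ∀ y, 0 ≤ ω y) (hmeas : Measurable ω)
    (hbdd : ∃ M, ∀ y, ω y ≤ M) (hsupp : HasCompactSupport ω) :
    |∫ x, ∫ y, ⟪gradient W (x - B), F x - F y⟫ * ω y * ω x| ≤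
      C_W * C_F * (∫ y, ω y) * (1 + 2 * R / h) * (∫ y in {y : E2 | R < ‖y - B‖}, ω y) +
        2 * C_W * C_F * ((∫ y, ‖y - B‖ ^ 2 * ω y) / (R ^ 2 * h)) *
          (∫ y in {y : E2 | R < ‖y - B‖}, ω y) :=
  stmt12_general B R h C_W C_F hh hRh W hgrad_zero hgrad_bd F hF_bd hF_lip ω hnn hmeas hbdd hsupp
end
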